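/- Fix i ≥ 0 and expand π_i as a power series in T, π_i = Σ_{j≥1} c_j T^j with c_j ∈ ℤ_p. If j satisfies p^{i'} ≤ j < p^{i'+1} ≤ p^i for some integer i' ≥ 0, then ord_p(c_j) ≥ i − i'. -/

import Mathlib

open PowerSeries
open scoped Classical

noncomputable section

/-- The power series `Σ_{i≥0} X^(p^i − 1)`, the logarithmic derivative of the
Artin–Hasse exponential. -/
def ahLogDeriv (p : ℕ) (R : Type*) [CommRing R] : PowerSeries R :=
  PowerSeries.mk fun n => if ∃ i : ℕ, n + 1 = p ^ i then 1 else 0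

/-- `E` is the Artin–Hasse exponential `exp(Σ_{i≥0} X^(p^i)/p^i)`: over a characteristic-zero
ring with no additive torsion this is equivalent to `E(0) = 1` together with the logarithmic
differential equation `E' = E · Σ_{i≥0} X^(p^i−1)`. -/
def IsArtinHasse (p : ℕ) {R : Type*} [CommRing R] (E : PowerSeries R) : Prop :=
  PowerSeries.constantCoeff E = 1 ∧
    (PowerSeries.derivative R) E = E * ahLogDeriv p R

/-- Composition `f(g)` of formal power series (intended for `g` with zero constant term,
in which case this is the usual substitution). -/
def psComp {R : Type*} [CommRing R] (f g : PowerSeries R) : PowerSeries R :=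
  PowerSeries.mk fun n => ∑ k ∈ Finset.range (n + 1),
    PowerSeries.coeff k f * PowerSeries.coeff n (g ^ k)

/-- `w = π_i`: the unique power series with zero constant term satisfying
`E(π_i) = (1+T)^(p^i)`. -/
def IsPiAH (p : ℕ) {R : Type*} [CommRing R] (E : PowerSeries R) (i : ℕ)
    (w : PowerSeries R) : Prop :=
  PowerSeries.constantCoeff w = 0 ∧ psComp E w = (1 + PowerSeries.X) ^ p ^ i

/-- `bin z n` is the binomial coefficient `C(z, n)`, characterized by
`n! · bin z n = z(z−1)⋯(z−n+1)`. -/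
def IsBinomial {R : Type*} [CommRing R] (bin : R → ℕ → R) : Prop :=
  ∀ z n, (n.factorial : R) * bin z n = ∏ i ∈ Finset.range n, (z - (i : R))

/-- The binomial series `(1+T)^z = Σ_n C(z,n) Tⁿ`. -/
def onePlusTPow {R : Type*} [CommRing R] (bin : R → ℕ → R) (z : R) : PowerSeries R :=
  PowerSeries.mk fun n => bin z n

/-- `F^z = Σ_n C(z,n) (F−1)ⁿ` for a power series `F` with constant term `1`. -/
def psPow {R : Type*} [CommRing R] (bin : R → ℕ → R) (z : R) (F : PowerSeries R) :
    PowerSeries R :=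
  PowerSeries.mk fun n => ∑ k ∈ Finset.range (n + 1),
    bin z k * PowerSeries.coeff n ((F - 1) ^ k)

/-- The canonical ring map `ℤ_p = W(𝔽_p) → W(F)` for a ring `F` of characteristic `p`. -/
def toWitt (p : ℕ) [Fact p.Prime] (F : Type*) [CommRing F] [CharP F p] :
    ℤ_[p] →+* WittVector p F :=
  (WittVector.map (ZMod.castHom dvd_rfl F)).comp (WittVector.equiv p).symm.toRingHom

/-- `E(cst · η · x^u)` as a power series in `x` whose coefficients are power series
(in the variable of `η`). -/
def EmonoSub {R : Type*} [CommRing R] (E : PowerSeries R) (eta : PowerSeries R) (cst : R)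
    (u : ℕ) : PowerSeries (PowerSeries R) :=
  if u = 0 then PowerSeries.C (psComp E (PowerSeries.C cst * eta))
  else PowerSeries.mk fun v =>
    if u ∣ v then PowerSeries.C (PowerSeries.coeff (v / u) E * cst ^ (v / u)) * eta ^ (v / u)
    else 0

/-- `E_h(x, η) = ∏_{u=0}^{d'} E(η ĥ_u x^u)` for `h` with (lifted) coefficients `co u`. -/
def Eh {R : Type*} [CommRing R] (E : PowerSeries R) (eta : PowerSeries R) (co : ℕ → R)
    (d' : ℕ) : PowerSeries (PowerSeries R) :=
  ∏ u ∈ Finset.range (d' + 1), EmonoSub E eta (co u) u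

/-- The partial product `∏_{i<n} E_{f_i}(x, π_i)`. -/
def EfPartial {R : Type*} [CommRing R] (E : PowerSeries R) (Pi : ℕ → PowerSeries R)
    (co : ℕ → ℕ → R) (d : ℕ → ℕ) (n : ℕ) : PowerSeries (PowerSeries R) :=
  ∏ i ∈ Finset.range n, Eh E (Pi i) (co i) (d i)

/-- `Ef = E_f(x) = ∏_{i=0}^∞ E_{f_i}(x, π_i)`, as the `(p,T)`-adic limit of the partial
products: the `x^u`-coefficient of `E_f − ∏_{i<n} E_{f_i}` lies in `(p, T)^(n+1)`. -/
def IsEfProd (p : ℕ) {R : Type*} [CommRing R] (E : PowerSeries R) (Pi : ℕ → PowerSeries R)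
    (co : ℕ → ℕ → R) (d : ℕ → ℕ) (Ef : PowerSeries (PowerSeries R)) : Prop :=
  ∀ n u : ℕ,
    PowerSeries.coeff u Ef - PowerSeries.coeff u (EfPartial E Pi co d n)
      ∈ (Ideal.span {(p : PowerSeries R), PowerSeries.X}) ^ (n + 1)

/-- `ord_R(g) ≥ r`:  for `mt = 1` the `T`-adic order of `g` is at least `r`; for `mt ≥ 2`,
writing `g = Σ_j c_j T^j`, `min_j (ord_p(c_j)·p^(mt−2)(p−1) + j) ≥ r`
(the `(p^θ, T)`-adic order with `θ = 1/(p^(mt−2)(p−1))`, normalized by `ord_R(T) = 1`). -/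
def ordRge (p : ℕ) {R : Type*} [CommRing R] (mt : ℕ) (g : PowerSeries R) (r : ℚ) : Prop :=
  ∀ j n : ℕ, ¬ ((p : R) ^ (n + 1) ∣ PowerSeries.coeff j g) →
    (if mt = 1 then r ≤ (j : ℚ)
     else r ≤ (n : ℚ) * ((p : ℚ) ^ (mt - 2) * ((p : ℚ) - 1)) + (j : ℚ))


/-!
Comparing `T^j`-coefficients in `E(π_i) = (1+T)^(p^i)`, and using `E(X) = 1 + X + O(X²)`, gives
`c_j = C(p^i, j) - Σ_{k ≥ 2} e_k [T^j] π_i^k`. The binomial coefficient is divisible by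
`p^(i - ord_p j)`, hence by `p^(i - log_p j)`. Since `π_i` has no constant term, `[T^j] π_i^k` for
`k ≥ 2` is a sum of products each containing some `c_m` with `0 < m < j`, so by strong induction on
`j` it is divisible by `p^(i - log_p m)`, hence by `p^(i - log_p j)`.
-/

section CoeffDvd

variable {R : Type*} [CommRing R] (q : R) {w : ℕ → ℕ} {f : R⟦X⟧}

theorem PowerSeries.pow_dvd_coeff_pow_succ (hw : Antitone w) {b : ℕ}
    (h : ∀ m ≤ b, q ^ w m ∣ coeff m f) (n : ℕ) : q ^ w b ∣ coeff b (f ^ (n + 1)) := by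
  induction n generalizing b with
  | zero => simpa using h b le_rfl
  | succ n ih =>
    rw [pow_succ, coeff_mul]
    refine Finset.dvd_sum fun ⟨x, y⟩ hxy => ?_
    have hx : x ≤ b := Nat.le.intro (Finset.HasAntidiagonal.mem_antidiagonal.mp hxy)
    exact ((pow_dvd_pow q (hw hx)).trans (ih fun m hm => h m (hm.trans hx))).mul_right _

theorem PowerSeries.pow_dvd_coeff_pow_add_two (hw : Antitone w) (hf : constantCoeff f = 0)
    {j : ℕ} (h : ∀ m < j, q ^ w m ∣ coeff m f) (n : ℕ) : q ^ w j ∣ coeff j (f ^ (n + 2)) := by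
  rw [pow_succ, coeff_mul]
  refine Finset.dvd_sum fun ⟨x, y⟩ hxy => ?_
  rw [Finset.HasAntidiagonal.mem_antidiagonal] at hxy
  rcases Nat.eq_zero_or_pos y with rfl | hy
  · simp [hf]
  · have hx : x < j := by omega
    exact ((pow_dvd_pow q (hw hx.le)).trans
      (pow_dvd_coeff_pow_succ q hw (fun m hm => h m (hm.trans_lt hx)) n)).mul_right _

end CoeffDvd

theorem Nat.pow_sub_log_dvd_choose_prime_pow {p : ℕ} (hp : p.Prime) (n : ℕ) {k : ℕ}
    (hk : k ≠ 0) : p ^ (n - Nat.log p k) ∣ (p ^ n).choose k := by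
  rcases le_or_gt k (p ^ n) with hkn | hkn
  · have hfac : k.factorization p ≤ Nat.log p k :=
      Nat.le_log_of_pow_le hp.one_lt (Nat.ordProj_le p hk)
    calc p ^ (n - Nat.log p k) ∣ p ^ (n - k.factorization p) := pow_dvd_pow p (by omega)
      _ = p ^ ((p ^ n).choose k).factorization p := by
        rw [Nat.factorization_choose_prime_pow hp hkn hk]
      _ ∣ (p ^ n).choose k := Nat.ordProj_dvd _ p
  · simp [Nat.choose_eq_zero_of_lt hkn]

theorem coeff_succ_psComp {R : Type*} [CommRing R] (f g : R⟦X⟧) (m : ℕ) :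
    coeff (m + 1) (psComp f g) = coeff 1 f * coeff (m + 1) g +
      ∑ k ∈ Finset.range m, coeff (k + 2) f * coeff (m + 1) (g ^ (k + 2)) := by
  rw [psComp, coeff_mk, Finset.sum_range_succ', Finset.sum_range_succ']
  simp only [pow_zero, coeff_one, Nat.succ_ne_zero, if_false, mul_zero, add_zero, zero_add,
    pow_one]
  exact add_comm _ _

theorem PowerSeries.coeff_one_add_X_pow {R : Type*} [CommRing R] (N n : ℕ) :
    coeff n ((1 + X : R⟦X⟧) ^ N) = N.choose n := by
  rw [← Polynomial.coe_one, ← Polynomial.coe_X, ← Polynomial.coe_add, ← Polynomial.coe_pow,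
    Polynomial.coeff_coe, Polynomial.coeff_one_add_X_pow]

theorem IsArtinHasse.coeff_one {p : ℕ} {R : Type*} [CommRing R] {E : R⟦X⟧}
    (hE : IsArtinHasse p E) : coeff 1 E = 1 := by
  have h := congrArg (coeff 0) hE.2
  rw [coeff_derivative, coeff_mul] at h
  have hlog : coeff 0 (ahLogDeriv p R) = 1 := by
    simp [ahLogDeriv, show ∃ i, 1 = p ^ i from ⟨0, (pow_zero p).symm⟩]
  simpa [coeff_zero_eq_constantCoeff, hE.1, hlog] using h

theorem IsPiAH.pow_sub_log_dvd_coeff {p : ℕ} (hp : p.Prime) {R : Type*} [CommRing R]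
    {E : R⟦X⟧} (hE : IsArtinHasse p E) {i : ℕ} {π : R⟦X⟧} (hπ : IsPiAH p E i π) (j : ℕ) :
    (p : R) ^ (i - Nat.log p j) ∣ coeff j π := by
  have hw : Antitone fun m => i - Nat.log p m :=
    fun _ _ h => Nat.sub_le_sub_left (Nat.log_mono_right h) i
  induction j using Nat.strong_induction_on with
  | _ j ih =>
  cases j with
  | zero => simp [coeff_zero_eq_constantCoeff, hπ.1]
  | succ m =>
    have hcoeff := congrArg (coeff (m + 1)) hπ.2
    rw [coeff_succ_psComp, hE.coeff_one, one_mul, coeff_one_add_X_pow] at hcoeff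
    rw [eq_sub_of_add_eq hcoeff]
    refine dvd_sub ?_ (Finset.dvd_sum fun k _ => ?_)
    · exact_mod_cast
        Nat.cast_dvd_cast (Nat.pow_sub_log_dvd_choose_prime_pow hp i m.succ_ne_zero)
    · exact (pow_dvd_coeff_pow_add_two _ hw hπ.1 ih k).mul_left _

theorem pi_i_coeff_padic_valuation_general (p : ℕ) [Fact p.Prime]
    (E : PowerSeries ℤ_[p]) (hE : IsArtinHasse p E)
    (i : ℕ) (pii : PowerSeries ℤ_[p]) (hpii : IsPiAH p E i pii)
    (j i' : ℕ) (h1 : p ^ i' ≤ j) (h2 : j < p ^ (i' + 1)) :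
    (p : ℤ_[p]) ^ (i - i') ∣ PowerSeries.coeff j pii := by
  simpa [Nat.log_eq_of_pow_le_of_lt_pow h1 h2] using hpii.pow_sub_log_dvd_coeff Fact.out hE j

/-- If `π_i = Σ_{j≥1} c_j T^j` and `p^{i'} ≤ j < p^{i'+1} ≤ p^i`,
then `ord_p(c_j) ≥ i − i'`. -/
theorem pi_i_coeff_padic_valuation (p : ℕ) [Fact p.Prime]
    (E : PowerSeries ℤ_[p]) (hE : IsArtinHasse p E)
    (i : ℕ) (pii : PowerSeries ℤ_[p]) (hpii : IsPiAH p E i pii)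
    (j i' : ℕ) (h1 : p ^ i' ≤ j) (h2 : j < p ^ (i' + 1)) (h3 : p ^ (i' + 1) ≤ p ^ i) :
    (p : ℤ_[p]) ^ (i - i') ∣ PowerSeries.coeff j pii :=
  pi_i_coeff_padic_valuation_general p E hE i pii hpii j i' h1 h2

end
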